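/- arXiv:2306.10261 — 2 statements merged into one kernel-verified Lean document; each statement's English description precedes it below -/
import Mathlib

section
/- Let 𝔐 and 𝔑 be closed subspaces of a Hilbert space H with orthogonal projections p_𝔐 and p_𝔑. Then ‖p_𝔐 - p_𝔑‖ = max{ sup_{x ∈ 𝔐, ‖x‖=1} dist(x, 𝔑), sup_{y ∈ 𝔑, ‖y‖=1} dist(y, 𝔐) }. -/
open Metric

section Aux

variable {H : Type*} [NormedAddCommGroup H] [InnerProductSpace ℂ H] [CompleteSpace H]

private lemma infDist_eq_proj (K : Submodule ℂ H) [CompleteSpace K] (u : H) :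
    Metric.infDist u (K : Set H) = ‖u - (Submodule.orthogonalProjectionOnto K u : H)‖ := by
  rw [Metric.infDist_eq_iInf, ← Submodule.starProjection_apply, Submodule.starProjection_minimal]
  simp_rw [dist_eq_norm]
  rfl

private lemma bdd_aux (M N : Submodule ℂ H) :
    BddAbove (Set.range fun x : {x : H // x ∈ M ∧ ‖x‖ = 1} =>
      Metric.infDist (x : H) (N : Set H)) := by
  refine ⟨1, ?_⟩
  rintro r ⟨⟨x, hx, hx1⟩, rfl⟩
  calc Metric.infDist x (N : Set H) ≤ dist x (0 : H) :=
        Metric.infDist_le_dist_of_mem (by simp [Submodule.zero_mem])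
    _ = 1 := by simp [dist_eq_norm, hx1]

/-- For `u ∈ M`, `dist(u, N) ≤ δ₁ * ‖u‖`. -/
private lemma key (M N : Submodule ℂ H) [CompleteSpace M] [CompleteSpace N] (u : H)
    (hu : u ∈ M) :
    ‖u - (Submodule.orthogonalProjectionOnto N u : H)‖ ≤
      (⨆ x : {x : H // x ∈ M ∧ ‖x‖ = 1}, Metric.infDist (x : H) (N : Set H)) * ‖u‖ := by
  rcases eq_or_ne u 0 with rfl | hu0
  · simp
  · have hn : ‖u‖ ≠ 0 := norm_ne_zero_iff.mpr hu0
    set c : ℂ := (‖u‖ : ℂ)⁻¹ with hc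
    have hxmem : c • u ∈ M := M.smul_mem _ hu
    have hxnorm : ‖c • u‖ = 1 := by
      simp [hc, norm_smul, hn]
    have hle : Metric.infDist (c • u) (N : Set H) ≤
        ⨆ x : {x : H // x ∈ M ∧ ‖x‖ = 1}, Metric.infDist (x : H) (N : Set H) :=
      le_ciSup (bdd_aux M N) ⟨c • u, hxmem, hxnorm⟩
    have heq : Metric.infDist (c • u) (N : Set H) = ‖u‖⁻¹ * ‖u - (Submodule.orthogonalProjectionOnto N u : H)‖ := by
      rw [infDist_eq_proj, map_smul]
      have : c • u - (c • (Submodule.orthogonalProjectionOnto N u) : N) = c • (u - (Submodule.orthogonalProjectionOnto N u : H)) := by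
        push_cast
        rw [smul_sub]
      rw [this, norm_smul]
      simp [hc]
    rw [heq] at hle
    have h0 : (0:ℝ) < ‖u‖ := lt_of_le_of_ne (norm_nonneg _) (Ne.symm hn)
    calc ‖u - (Submodule.orthogonalProjectionOnto N u : H)‖
        = (‖u‖⁻¹ * ‖u - (Submodule.orthogonalProjectionOnto N u : H)‖) * ‖u‖ := by
          field_simp
      _ ≤ _ := by
          apply mul_le_mul_of_nonneg_right hle (norm_nonneg _)

/-- For `w ∈ Nᗮ`, `‖P_M w‖ ≤ δ₁ * ‖w‖`. -/
private lemma proj_bound (M N : Submodule ℂ H) [CompleteSpace M] [CompleteSpace N] (w : H)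
    (hw : w ∈ Nᗮ) :
    ‖(Submodule.orthogonalProjectionOnto M w : H)‖ ≤
      (⨆ x : {x : H // x ∈ M ∧ ‖x‖ = 1}, Metric.infDist (x : H) (N : Set H)) * ‖w‖ := by
  set δ := ⨆ x : {x : H // x ∈ M ∧ ‖x‖ = 1}, Metric.infDist (x : H) (N : Set H) with hδ
  have hδ0 : 0 ≤ δ := Real.iSup_nonneg fun _ => Metric.infDist_nonneg
  set v : H := (Submodule.orthogonalProjectionOnto M w : H) with hv
  have hvM : v ∈ M := (Submodule.orthogonalProjectionOnto M w).2
  have h1 : (inner ℂ v (w - v) : ℂ) = 0 := by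
    have := Submodule.sub_starProjection_mem_orthogonal (K := M) w
    exact (Submodule.mem_orthogonal M (w - v)).mp this v hvM
  have h2 : (inner ℂ v v : ℂ) = inner ℂ v w := by
    have := inner_sub_right (𝕜 := ℂ) v w v
    rw [h1] at this
    exact (sub_eq_zero.mp this.symm).symm
  -- split w-inner ℂ using N component
  have h3 : (inner ℂ v w : ℂ) = inner ℂ (v - (Submodule.orthogonalProjectionOnto N v : H)) w := by
    have hmem : (Submodule.orthogonalProjectionOnto N v : H) ∈ N := (Submodule.orthogonalProjectionOnto N v).2
    have : (inner ℂ ((Submodule.orthogonalProjectionOnto N v : H)) w : ℂ) = 0 :=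
      (Submodule.mem_orthogonal N w).mp hw _ hmem
    rw [inner_sub_left, this, sub_zero]
  have hnormsq : ‖v‖ ^ 2 = RCLike.re (inner ℂ (v - (Submodule.orthogonalProjectionOnto N v : H)) w : ℂ) := by
    rw [← h3, ← h2, inner_self_eq_norm_sq v]
  have hb : ‖v - (Submodule.orthogonalProjectionOnto N v : H)‖ ≤ δ * ‖v‖ := key M N v hvM
  have hcs : RCLike.re (inner ℂ (v - (Submodule.orthogonalProjectionOnto N v : H)) w : ℂ) ≤
      ‖v - (Submodule.orthogonalProjectionOnto N v : H)‖ * ‖w‖ := re_inner_le_norm _ _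
  have hsq : ‖v‖ ^ 2 ≤ δ * ‖v‖ * ‖w‖ := by
    calc ‖v‖ ^ 2 ≤ ‖v - (Submodule.orthogonalProjectionOnto N v : H)‖ * ‖w‖ := by rw [hnormsq]; exact hcs
      _ ≤ δ * ‖v‖ * ‖w‖ := mul_le_mul_of_nonneg_right hb (norm_nonneg _)
  rcases eq_or_lt_of_le (norm_nonneg v) with h0 | h0
  · rw [← h0]; positivity
  · nlinarith

end Aux

/-- For closed subspaces `𝔐, 𝔑` of a Hilbert space with orthogonal projections
`p_𝔐, p_𝔑`, the gap formula
`‖p_𝔐 - p_𝔑‖ = max (sup_{x∈𝔐,‖x‖=1} dist(x,𝔑)) (sup_{y∈𝔑,‖y‖=1} dist(y,𝔐))` holds. -/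
theorem stmt3 {H : Type*} [NormedAddCommGroup H] [InnerProductSpace ℂ H] [CompleteSpace H]
    (M N : Submodule ℂ H) [CompleteSpace M] [CompleteSpace N] :
    ‖(M.subtypeL.comp (Submodule.orthogonalProjectionOnto M) : H →L[ℂ] H) -
        N.subtypeL.comp (Submodule.orthogonalProjectionOnto N)‖ =
      max (⨆ x : {x : H // x ∈ M ∧ ‖x‖ = 1}, Metric.infDist (x : H) (N : Set H))
        (⨆ y : {y : H // y ∈ N ∧ ‖y‖ = 1}, Metric.infDist (y : H) (M : Set H)) := by
  set P := (M.subtypeL.comp (Submodule.orthogonalProjectionOnto M) : H →L[ℂ] H) with hP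
  set Q := (N.subtypeL.comp (Submodule.orthogonalProjectionOnto N) : H →L[ℂ] H) with hQ
  set δ₁ := ⨆ x : {x : H // x ∈ M ∧ ‖x‖ = 1}, Metric.infDist (x : H) (N : Set H) with hδ₁
  set δ₂ := ⨆ y : {y : H // y ∈ N ∧ ‖y‖ = 1}, Metric.infDist (y : H) (M : Set H) with hδ₂
  have hδ₁0 : 0 ≤ δ₁ := Real.iSup_nonneg fun _ => Metric.infDist_nonneg
  have hδ₂0 : 0 ≤ δ₂ := Real.iSup_nonneg fun _ => Metric.infDist_nonneg
  have hPapp : ∀ z : H, P z = (Submodule.orthogonalProjectionOnto M z : H) := fun z => rfl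
  have hQapp : ∀ z : H, Q z = (Submodule.orthogonalProjectionOnto N z : H) := fun z => rfl
  apply le_antisymm
  · -- hard direction
    apply ContinuousLinearMap.opNorm_le_bound _ (le_max_of_le_left hδ₁0)
    intro z
    set b : H := (Submodule.orthogonalProjectionOnto N z : H) with hb
    set a : H := z - b with ha
    have haN : a ∈ Nᗮ := Submodule.sub_starProjection_mem_orthogonal z
    have hbN : b ∈ N := (Submodule.orthogonalProjectionOnto N z).2
    -- decomposition
    have hdecomp : (P - Q) z = (Submodule.orthogonalProjectionOnto M a : H) +
        -(b - (Submodule.orthogonalProjectionOnto M b : H)) := by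
      have hz : z = a + b := by rw [ha]; abel
      simp only [ContinuousLinearMap.sub_apply, hPapp, hQapp]
      rw [← hb]
      nth_rewrite 1 [hz]
      rw [map_add]
      push_cast
      abel
    have horth : (inner ℂ ((Submodule.orthogonalProjectionOnto M a : H))
        (-(b - (Submodule.orthogonalProjectionOnto M b : H))) : ℂ) = 0 := by
      rw [inner_neg_right]
      have h0 : (inner ℂ ((Submodule.orthogonalProjectionOnto M a : H)) (b - (Submodule.orthogonalProjectionOnto M b : H)) : ℂ) = 0 :=
        (Submodule.mem_orthogonal M _).mp (Submodule.sub_starProjection_mem_orthogonal b) _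
          (Submodule.orthogonalProjectionOnto M a).2
      rw [h0, neg_zero]
    have hpyth : ‖(P - Q) z‖ * ‖(P - Q) z‖ =
        ‖(Submodule.orthogonalProjectionOnto M a : H)‖ * ‖(Submodule.orthogonalProjectionOnto M a : H)‖ +
        ‖b - (Submodule.orthogonalProjectionOnto M b : H)‖ * ‖b - (Submodule.orthogonalProjectionOnto M b : H)‖ := by
      rw [hdecomp, norm_add_sq_eq_norm_sq_add_norm_sq_of_inner_eq_zero _ _ horth, norm_neg]
    have hzpyth : ‖z‖ * ‖z‖ = ‖b‖ * ‖b‖ + ‖a‖ * ‖a‖ := by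
      have hz : z = b + a := by rw [ha]; abel
      have h0 : (inner ℂ b a : ℂ) = 0 := (Submodule.mem_orthogonal N a).mp haN b hbN
      nth_rewrite 1 2 [hz]
      exact norm_add_sq_eq_norm_sq_add_norm_sq_of_inner_eq_zero _ _ h0
    have h1 : ‖(Submodule.orthogonalProjectionOnto M a : H)‖ ≤ δ₁ * ‖a‖ := proj_bound M N a haN
    have h2 : ‖b - (Submodule.orthogonalProjectionOnto M b : H)‖ ≤ δ₂ * ‖b‖ := key N M b hbN
    set m := max δ₁ δ₂ with hm
    have hm0 : 0 ≤ m := le_max_of_le_left hδ₁0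
    have hsq : ‖(P - Q) z‖ * ‖(P - Q) z‖ ≤ (m * ‖z‖) * (m * ‖z‖) := by
      have e1 : δ₁ ≤ m := le_max_left _ _
      have e2 : δ₂ ≤ m := le_max_right _ _
      have ha0 : (0:ℝ) ≤ ‖a‖ := norm_nonneg _
      have hb0 : (0:ℝ) ≤ ‖b‖ := norm_nonneg _
      have hPa0 : (0:ℝ) ≤ ‖(Submodule.orthogonalProjectionOnto M a : H)‖ := norm_nonneg _
      have hQb0 : (0:ℝ) ≤ ‖b - (Submodule.orthogonalProjectionOnto M b : H)‖ := norm_nonneg _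
      have k1 : ‖(Submodule.orthogonalProjectionOnto M a : H)‖ * ‖(Submodule.orthogonalProjectionOnto M a : H)‖ ≤
          (m * ‖a‖) * (m * ‖a‖) :=
        mul_self_le_mul_self hPa0 (h1.trans (mul_le_mul_of_nonneg_right e1 ha0))
      have k2 : ‖b - (Submodule.orthogonalProjectionOnto M b : H)‖ * ‖b - (Submodule.orthogonalProjectionOnto M b : H)‖ ≤
          (m * ‖b‖) * (m * ‖b‖) :=
        mul_self_le_mul_self hQb0 (h2.trans (mul_le_mul_of_nonneg_right e2 hb0))
      have hz2 : m * m * (‖z‖ * ‖z‖) = m * m * (‖b‖ * ‖b‖ + ‖a‖ * ‖a‖) := by rw [hzpyth]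
      nlinarith [hpyth, k1, k2, hz2]
    exact (mul_self_le_mul_self_iff (norm_nonneg _) (mul_nonneg hm0 (norm_nonneg z))).mpr hsq
  · -- easy direction
    apply max_le
    · apply Real.iSup_le _ (norm_nonneg _)
      rintro ⟨x, hxM, hx1⟩
      have : Metric.infDist x (N : Set H) = ‖(P - Q) x‖ := by
        rw [infDist_eq_proj]
        simp only [ContinuousLinearMap.sub_apply, hPapp, hQapp]
        rw [show (Submodule.orthogonalProjectionOnto M x : H) = x from Submodule.starProjection_eq_self_iff.mpr hxM]
      rw [this]
      calc ‖(P - Q) x‖ ≤ ‖P - Q‖ * ‖x‖ := (P - Q).le_opNorm x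
        _ = ‖P - Q‖ := by rw [hx1, mul_one]
    · apply Real.iSup_le _ (norm_nonneg _)
      rintro ⟨y, hyN, hy1⟩
      have : Metric.infDist y (M : Set H) = ‖(P - Q) y‖ := by
        rw [infDist_eq_proj]
        simp only [ContinuousLinearMap.sub_apply, hPapp, hQapp]
        rw [show (Submodule.orthogonalProjectionOnto N y : H) = y from Submodule.starProjection_eq_self_iff.mpr hyN]
        rw [← norm_neg]
        congr 1
        abel
      rw [this]
      calc ‖(P - Q) y‖ ≤ ‖P - Q‖ * ‖y‖ := (P - Q).le_opNorm y
        _ = ‖P - Q‖ := by rw [hy1, mul_one]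
end

section
/- Let f_t(z) = t - z for t ∈ [1/2, 2] and z in the closed unit disc. Then ‖f_t - f_1‖_∞ = |t - 1| → 0 as t → 1, but for t ∈ [1/2, 1), the inner part of f_t is Q_inn(f_t)(z) = (t - z)/(1 - tz) while Q_inn(f_1) = 1, and ‖(t - z)/(1 - tz) - 1‖_∞ = sup_{|z|<1} |(t-z)/(1-tz) - 1| = 2 for every t ∈ [1/2, 1). Hence t ↦ Q_inn(f_t) is not continuous at t = 1 in the supremum norm. -/
/-- The supremum norm over the open unit disc. -/
noncomputable def supNorm (f : ℂ → ℂ) : ℝ := ⨆ z : Metric.ball (0 : ℂ) 1, ‖f z.1‖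

/-- The inner part of `f_t(z) = t - z` for `t ∈ [1/2, 2]`: the Blaschke factor
`(t - z)/(1 - tz)` for `t < 1`, and the constant `1` for `t ≥ 1` (then `t - z` is outer). -/
noncomputable def Qinn (t : ℝ) : ℂ → ℂ :=
  if t < 1 then fun z => ((t : ℂ) - z) / (1 - (t : ℂ) * z) else fun _ => 1

instance ballNonempty : Nonempty (Metric.ball (0 : ℂ) 1) :=
  ⟨⟨0, by simp⟩⟩

lemma blaschke_norm_le {t : ℝ} (ht0 : 0 ≤ t) (ht1 : t < 1) {z : ℂ} (hz : ‖z‖ < 1) :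
    ‖((t : ℂ) - z) / (1 - (t : ℂ) * z)‖ ≤ 1 := by
  have hz2 : z.re ^ 2 + z.im ^ 2 < 1 := by
    have := Complex.sq_norm z
    have h := hz
    nlinarith [Complex.sq_norm z, Complex.normSq_apply z, norm_nonneg z]
  have hden : Complex.normSq (1 - (t : ℂ) * z) > 0 := by
    rw [Complex.normSq_apply]
    simp only [Complex.sub_re, Complex.sub_im, Complex.one_re, Complex.one_im,
      Complex.mul_re, Complex.mul_im, Complex.ofReal_re, Complex.ofReal_im]
    have hx : t * z.re < 1 := by nlinarith [sq_nonneg (t - z.re), sq_nonneg z.im]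
    nlinarith [mul_pos (sub_pos.mpr hx) (sub_pos.mpr hx), sq_nonneg (t * z.im)]
  have hnum : Complex.normSq ((t : ℂ) - z) ≤ Complex.normSq (1 - (t : ℂ) * z) := by
    simp only [Complex.normSq_apply, Complex.sub_re, Complex.sub_im, Complex.one_re,
      Complex.one_im, Complex.mul_re, Complex.mul_im, Complex.ofReal_re, Complex.ofReal_im]
    nlinarith [mul_pos (show (0:ℝ) < 1 - t^2 by nlinarith) (show (0:ℝ) < 1 - (z.re^2+z.im^2) by linarith)]
  rw [norm_div, div_le_one]
  · rw [Complex.norm_def, Complex.norm_def]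
    exact Real.sqrt_le_sqrt hnum
  · rw [Complex.norm_def]
    exact Real.sqrt_pos.mpr (by exact_mod_cast hden)

lemma qinn_one : Qinn 1 = fun _ => 1 := by
  simp [Qinn]

lemma part2 {t : ℝ} (ht : t ∈ Set.Ico (1 / 2 : ℝ) 1) :
    supNorm (Qinn t - Qinn 1) = 2 := by
  obtain ⟨ht0, ht1⟩ := ht
  have ht0' : (0:ℝ) ≤ t := by linarith
  have hq : Qinn t = fun z => ((t : ℂ) - z) / (1 - (t : ℂ) * z) := by
    simp [Qinn, ht1]
  have hub : ∀ z : Metric.ball (0 : ℂ) 1, ‖(Qinn t - Qinn 1) z.1‖ ≤ 2 := by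
    rintro ⟨z, hz⟩
    simp only [Pi.sub_apply, hq, qinn_one]
    have hz' : ‖z‖ < 1 := by simpa [Metric.mem_ball] using hz
    calc ‖((t : ℂ) - z) / (1 - (t : ℂ) * z) - 1‖
        ≤ ‖((t : ℂ) - z) / (1 - (t : ℂ) * z)‖ + ‖(1:ℂ)‖ := norm_sub_le _ _
      _ ≤ 1 + 1 := by
          have := blaschke_norm_le ht0' ht1 hz'
          simp only [norm_one]
          linarith
      _ = 2 := by norm_num
  have hbdd : BddAbove (Set.range fun z : Metric.ball (0 : ℂ) 1 => ‖(Qinn t - Qinn 1) z.1‖) := by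
    refine ⟨2, ?_⟩
    rintro x ⟨z, rfl⟩
    exact hub z
  refine le_antisymm (ciSup_le hub) ?_
  -- lower bound : 2 ≤ sup
  refine le_of_forall_pos_le_add ?_
  intro ε hε
  set δ : ℝ := min 1 (ε * (1 - t) / 4) with hδdef
  have hδpos : 0 < δ := lt_min one_pos (by nlinarith)
  have hδ1 : δ ≤ 1 := min_le_left _ _
  have hδε : δ ≤ ε * (1 - t) / 4 := min_le_right _ _
  set r : ℝ := 1 - δ with hrdef
  have hr0 : 0 ≤ r := by simp [hrdef]; linarith
  have hr1 : r < 1 := by simp [hrdef]; linarith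
  have hmem : ((r : ℂ)) ∈ Metric.ball (0 : ℂ) 1 := by
    simp [Complex.norm_real, abs_of_nonneg hr0, hr1]
  have hden : 0 < 1 - t * r := by nlinarith
  have hval : ‖(Qinn t - Qinn 1) (r : ℂ)‖ = |(t - r) / (1 - t * r) - 1| := by
    simp only [Pi.sub_apply, hq, qinn_one]
    have : ((t : ℂ) - (r:ℂ)) / (1 - (t : ℂ) * (r:ℂ)) - 1 = (((t - r) / (1 - t * r) - 1 : ℝ) : ℂ) := by
      push_cast
      ring_nf
    rw [this, Complex.norm_real, Real.norm_eq_abs]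
  have hineq : 2 - ε ≤ |(t - r) / (1 - t * r) - 1| := by
    have h1 : (t - r) / (1 - t * r) - 1 ≤ ε - 2 := by
      rw [sub_le_iff_le_add, div_le_iff₀ hden]
      nlinarith [hrdef, hδε, mul_nonneg (mul_nonneg hε.le ht0') hδpos.le,
        mul_nonneg (sub_nonneg.2 ht1.le) hδpos.le]
    calc 2 - ε ≤ -((t - r) / (1 - t * r) - 1) := by linarith
      _ ≤ |(t - r) / (1 - t * r) - 1| := neg_le_abs _
  have hle : ‖(Qinn t - Qinn 1) ((r : ℝ) : ℂ)‖ ≤ supNorm (Qinn t - Qinn 1) := by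
    unfold supNorm
    exact le_ciSup hbdd (⟨((r : ℝ) : ℂ), hmem⟩ : Metric.ball (0 : ℂ) 1)
  rw [hval] at hle
  linarith

/-- For `f_t(z) = t - z`, `‖f_t - f_1‖_∞ = |t - 1| → 0` as `t → 1`, yet
`‖Q_inn(f_t) - Q_inn(f_1)‖_∞ = 2` for every `t ∈ [1/2, 1)`; hence `t ↦ Q_inn(f_t)` is
not continuous at `t = 1` in the supremum norm. -/
theorem stmt12 :
    (∀ t : ℝ, supNorm ((fun z : ℂ => (t : ℂ) - z) - fun z : ℂ => (1 : ℂ) - z) = |t - 1|) ∧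
    (∀ t ∈ Set.Ico (1 / 2 : ℝ) 1, supNorm (Qinn t - Qinn 1) = 2) ∧
    ¬ (∀ ε > (0 : ℝ), ∃ δ > (0 : ℝ), ∀ t ∈ Set.Icc (1 / 2 : ℝ) 2,
        |t - 1| < δ → supNorm (Qinn t - Qinn 1) < ε) := by
  refine ⟨?_, fun t ht => part2 ht, ?_⟩
  · intro t
    have hf : ((fun z : ℂ => (t : ℂ) - z) - fun z : ℂ => (1 : ℂ) - z) = fun _ : ℂ => ((t - 1 : ℝ) : ℂ) := by
      funext z
      simp only [Pi.sub_apply]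
      push_cast
      ring
    rw [hf]
    unfold supNorm
    rw [ciSup_const]
    exact Complex.norm_real _
  · intro h
    obtain ⟨δ, hδ, hh⟩ := h 1 one_pos
    set t : ℝ := max (1/2) (1 - δ/2) with htdef
    have ht1 : t < 1 := by
      apply max_lt (by norm_num) (by linarith)
    have ht2 : t ∈ Set.Icc (1/2 : ℝ) 2 := ⟨le_max_left _ _, by
      apply max_le (by norm_num) (by linarith)⟩
    have htd : |t - 1| < δ := by
      rw [abs_sub_lt_iff]
      constructor
      · linarith
      · have : 1 - δ/2 ≤ t := le_max_right _ _
        linarith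
    have := hh t ht2 htd
    have h2 : supNorm (Qinn t - Qinn 1) = 2 :=
      part2 ⟨le_max_left _ _, ht1⟩
    rw [h2] at this
    linarith
end
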